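/- arXiv:1905.11904 — 4 statements merged into one kernel-verified Lean document; each statement's English description precedes it below -/
import Mathlib

section
/- Let h be a Legendre kernel on ℝⁿ with C := int dom h, and let f be L_f-smooth relative to h. If ∇h is Lipschitz continuous with modulus L̃ on an open convex set U ⊆ C, then ∇f is Lipschitz continuous on U with modulus L_f·L̃. -/
/-!
Relative smoothness makes `Lf • h ± f` convex on `U`, so the Bregman distances satisfy
`|D_f| ≤ Lf • D_h` there, and the descent lemma for the `Lt`-Lipschitz gradient `∇h` turns this
into the two-sided bound `|D_f(z, x)| ≤ (M / 2) ‖z - x‖²` with `M = Lf • Lt`.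

Such a bound forces `∇f` to be `M`-Lipschitz. The function `P = (M / 2) ‖·‖² - f` has
`0 ≤ D_P ≤ M ‖·‖²`, so its gradient `q = M • id - ∇f` is cocoercive (Baillon–Haddad):
`‖q x - q y‖² ≤ 2M ⟪q x - q y, x - y⟫`, and expanding `‖∇f x - ∇f y‖² = ‖M (x - y) - (q x - q y)‖²`
then gives `‖∇f x - ∇f y‖ ≤ M ‖x - y‖`. The cocoercivity estimate evaluates `P` off the segment
`[x, y]`, so it is first applied to nearby points whose surrounding balls lie in `U` and then
chained along the segment.
-/

open Filter Topology Set Bornology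
open scoped RealInnerProductSpace

noncomputable section

/-- `ℝⁿ` as a Euclidean space. -/
abbrev Rn (n : ℕ) := EuclideanSpace ℝ (Fin n)

variable {n : ℕ}

/-- Effective domain of an extended-real-valued function. -/
def edom (h : Rn n → EReal) : Set (Rn n) := {x | h x < ⊤}

/-- Properness: finite somewhere, never `⊥`. -/
def ERealProper (h : Rn n → EReal) : Prop := (∃ x, h x < ⊤) ∧ ∀ x, h x ≠ ⊥

/-- Convexity on a set for extended-real-valued functions. -/
def ERealConvexOn (s : Set (Rn n)) (h : Rn n → EReal) : Prop :=
  ∀ ⦃x⦄, x ∈ s → ∀ ⦃y⦄, y ∈ s → ∀ ⦃a b : ℝ⦄, 0 ≤ a → 0 ≤ b → a + b = 1 →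
    h (a • x + b • y) ≤ (a : EReal) * h x + (b : EReal) * h y

/-- Strict convexity on a set for extended-real-valued functions. -/
def ERealStrictConvexOn (s : Set (Rn n)) (h : Rn n → EReal) : Prop :=
  ∀ ⦃x⦄, x ∈ s → ∀ ⦃y⦄, y ∈ s → x ≠ y → ∀ ⦃a b : ℝ⦄, 0 < a → 0 < b → a + b = 1 →
    h (a • x + b • y) < (a : EReal) * h x + (b : EReal) * h y

/-- Strong convexity with modulus `σ` on a set, for extended-real-valued functions. -/
def ERealStrongConvexOn (s : Set (Rn n)) (σ : ℝ) (h : Rn n → EReal) : Prop :=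
  ∀ ⦃x⦄, x ∈ s → ∀ ⦃y⦄, y ∈ s → ∀ ⦃a b : ℝ⦄, 0 ≤ a → 0 ≤ b → a + b = 1 →
    h (a • x + b • y) + ((σ / 2 * (a * b) * ‖x - y‖ ^ 2 : ℝ) : EReal)
      ≤ (a : EReal) * h x + (b : EReal) * h y

/-- A Legendre kernel `h`, together with (a choice of) its gradient mapping `h'` on the
interior of its domain: proper, lsc, convex, 1-coercive, continuously differentiable and
strictly convex on the (nonempty) interior of its domain, and essentially smooth. -/
structure LegendreKernel (h : Rn n → EReal) (h' : Rn n → Rn n) : Prop where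
  proper : ERealProper h
  lsc : LowerSemicontinuous h
  convex : ERealConvexOn Set.univ h
  nonemptyInterior : (interior (edom h)).Nonempty
  coercive : ∀ M : ℝ, ∃ R : ℝ, ∀ x : Rn n, R ≤ ‖x‖ → ((M * ‖x‖ : ℝ) : EReal) ≤ h x
  differentiable : ∀ x ∈ interior (edom h), HasGradientAt (fun y => (h y).toReal) (h' x) x
  gradContinuous : ContinuousOn h' (interior (edom h))
  strictConvexOn : ERealStrictConvexOn (interior (edom h)) h
  essentiallySmooth : ∀ x ∈ frontier (edom h), ∀ u : ℕ → Rn n,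
    (∀ k, u k ∈ interior (edom h)) → Tendsto u atTop (𝓝 x) →
    Tendsto (fun k => ‖h' (u k)‖) atTop atTop

open scoped Classical in
/-- Bregman distance `D_h(z, x)`, equal to `⊤` when `x ∉ int dom h`. -/
def Dbreg (h : Rn n → EReal) (h' : Rn n → Rn n) (z x : Rn n) : EReal :=
  if x ∈ interior (edom h) then h z - h x - ((⟪h' x, z - x⟫ : ℝ) : EReal) else ⊤

/-- Objective function of the Bregman proximal subproblem. -/
def bregObj (h : Rn n → EReal) (h' : Rn n → Rn n) (φ : Rn n → EReal) (γ : ℝ)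
    (x z : Rn n) : EReal :=
  φ z + ((1 / γ : ℝ) : EReal) * Dbreg h h' z x

/-- Bregman–Moreau envelope `φ^{h/γ}`. -/
def bregEnv (h : Rn n → EReal) (h' : Rn n → Rn n) (φ : Rn n → EReal) (γ : ℝ)
    (x : Rn n) : EReal :=
  ⨅ z, bregObj h h' φ γ x z

/-- Bregman proximal mapping `prox_{γ φ}^h` (set of minimizers of the prox subproblem). -/
def bregProx (h : Rn n → EReal) (h' : Rn n → Rn n) (φ : Rn n → EReal) (γ : ℝ)
    (x : Rn n) : Set (Rn n) :=
  {z | ∀ w, bregObj h h' φ γ x z ≤ bregObj h h' φ γ x w}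

/-- `γ` lies strictly below the prox-boundedness threshold `γ_φ^h`. -/
def BelowThreshold (h : Rn n → EReal) (h' : Rn n → Rn n) (φ : Rn n → EReal) (γ : ℝ) : Prop :=
  0 < γ ∧ ∃ γ' : ℝ, γ < γ' ∧ ∃ x, bregEnv h h' φ γ' x ≠ ⊥

/-- `φ` is `h`-prox-bounded: the threshold `γ_φ^h` is positive. -/
def ProxBounded (h : Rn n → EReal) (h' : Rn n → Rn n) (φ : Rn n → EReal) : Prop :=
  ∃ γ : ℝ, 0 < γ ∧ ∃ x, bregEnv h h' φ γ x ≠ ⊥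

/-- `f` is `Lf`-smooth relative to the kernel `h`:  `f` is proper, lsc,
`dom f ⊇ dom h`, and `Lf·h ± f` are convex on `int dom h`. -/
def RelSmooth (h f : Rn n → EReal) (Lf : ℝ) : Prop :=
  ERealProper f ∧ LowerSemicontinuous f ∧ edom h ⊆ edom f ∧
  ERealConvexOn (interior (edom h)) (fun x => (Lf : EReal) * h x + f x) ∧
  ERealConvexOn (interior (edom h)) (fun x => (Lf : EReal) * h x - f x)

/-- Objective function of the Bregman forward-backward subproblem. -/
def fbObj (h : Rn n → EReal) (h' : Rn n → Rn n) (f : Rn n → EReal) (f' : Rn n → Rn n)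
    (g : Rn n → EReal) (γ : ℝ) (x z : Rn n) : EReal :=
  f x + ((⟪f' x, z - x⟫ : ℝ) : EReal) + g z + ((1 / γ : ℝ) : EReal) * Dbreg h h' z x

/-- Bregman forward-backward mapping `T_γ`. -/
def fbT (h : Rn n → EReal) (h' : Rn n → Rn n) (f : Rn n → EReal) (f' : Rn n → Rn n)
    (g : Rn n → EReal) (γ : ℝ) (x : Rn n) : Set (Rn n) :=
  {z | ∀ w, fbObj h h' f f' g γ x z ≤ fbObj h h' f f' g γ x w}

/-- Bregman forward-backward envelope `φ_γ`. -/
def fbEnv (h : Rn n → EReal) (h' : Rn n → Rn n) (f : Rn n → EReal) (f' : Rn n → Rn n)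
    (g : Rn n → EReal) (γ : ℝ) (x : Rn n) : EReal :=
  ⨅ z, fbObj h h' f f' g γ x z

end

open AffineMap Metric

theorem Convex.dist_le_mul_dist_of_closedBall_subset {E α : Type*} [NormedAddCommGroup E]
    [NormedSpace ℝ E] [PseudoMetricSpace α] {U : Set E} (hU : Convex ℝ U) (hUo : IsOpen U)
    {g : E → α} {K : ℝ}
    (hloc : ∀ x y, closedBall x (dist x y) ⊆ U → closedBall y (dist x y) ⊆ U →
      dist (g x) (g y) ≤ K * dist x y)
    {x y : E} (hx : x ∈ U) (hy : y ∈ U) : dist (g x) (g y) ≤ K * dist x y := by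
  have hseg : IsCompact (lineMap x y '' Icc (0 : ℝ) 1) := isCompact_Icc.image lineMap_continuous
  have hsub : lineMap x y '' Icc (0 : ℝ) 1 ⊆ U := by
    rintro _ ⟨t, ht, rfl⟩
    exact hU.lineMap_mem hx hy ht
  obtain ⟨δ, hδ, hthick⟩ := hseg.exists_thickening_subset_open hUo hsub
  obtain ⟨N, hN⟩ := exists_nat_gt (dist x y / δ)
  have hN₀ : (0 : ℝ) < N := lt_of_le_of_lt (by positivity) hN
  set c : ℕ → E := fun i => lineMap x y ((i : ℝ) / N)
  have hstep : ∀ i, dist (c i) (c (i + 1)) = dist x y / N := by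
    intro i
    simp only [c, dist_lineMap_lineMap, Real.dist_eq]
    push_cast
    rw [← sub_div, sub_add_cancel_left, abs_div, abs_neg, abs_one, abs_of_pos hN₀]
    ring
  have hball : ∀ i ≤ N, closedBall (c i) (dist x y / N) ⊆ U := by
    intro i hi
    have hsmall : dist x y / N < δ := by
      rw [div_lt_iff₀ hδ] at hN
      rw [div_lt_iff₀ hN₀]
      linarith
    have hci : c i ∈ lineMap x y '' Icc (0 : ℝ) 1 :=
      ⟨(i : ℝ) / N, ⟨by positivity, (div_le_one hN₀).2 (by exact_mod_cast hi)⟩, rfl⟩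
    exact (closedBall_subset_ball hsmall).trans ((ball_subset_thickening hci δ).trans hthick)
  calc dist (g x) (g y) = dist (g (c 0)) (g (c N)) := by simp [c, hN₀.ne']
    _ ≤ ∑ i ∈ Finset.range N, dist (g (c i)) (g (c (i + 1))) :=
        dist_le_range_sum_dist (fun i => g (c i)) N
    _ ≤ ∑ i ∈ Finset.range N, K * (dist x y / N) := by
        refine Finset.sum_le_sum fun i hi => ?_
        have hi := Finset.mem_range.1 hi
        rw [← hstep i]
        exact hloc _ _ (by rw [hstep]; exact hball i hi.le) (by rw [hstep]; exact hball _ hi)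
    _ = K * dist x y := by
        rw [Finset.sum_const, Finset.card_range, nsmul_eq_mul]
        field_simp

section Bregman

variable {E : Type*} [NormedAddCommGroup E] [InnerProductSpace ℝ E] {U : Set E}

def bregmanDist (F : E → ℝ) (g : E → E) (z x : E) : ℝ := F z - F x - ⟪g x, z - x⟫

section Gradient

variable [CompleteSpace E]

lemma HasGradientAt.hasDerivAt_comp_lineMap {F : E → ℝ} {g x y : E} {t : ℝ}
    (hF : HasGradientAt F g (lineMap x y t)) :
    HasDerivAt (fun s => F (lineMap x y s)) ⟪g, y - x⟫ t := by
  have h := hF.hasFDerivAt.comp_hasDerivAt t hasDerivAt_lineMap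
  rw [InnerProductSpace.toDual_apply_apply] at h
  exact h

lemma ConvexOn.bregmanDist_nonneg {F : E → ℝ} {g : E → E} (hF : ConvexOn ℝ U F)
    {x z : E} (hx : x ∈ U) (hz : z ∈ U) (hg : HasGradientAt F (g x) x) :
    0 ≤ bregmanDist F g z x := by
  have h := (hF.comp_affineMap (lineMap x z)).le_slope_of_hasDerivAt (x := 0) (y := 1)
    (by simpa) (by simpa) one_pos (HasGradientAt.hasDerivAt_comp_lineMap (by simpa))
  simp only [slope, Function.comp_apply, lineMap_apply_zero, lineMap_apply_one, sub_zero,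
    inv_one, vsub_eq_sub, smul_eq_mul, one_mul] at h
  rw [bregmanDist]
  linarith

lemma abs_bregmanDist_le_mul_of_convexOn_add_sub {c : ℝ} {H F : E → ℝ} {h f : E → E}
    (hplus : ConvexOn ℝ U fun x => c * H x + F x) (hminus : ConvexOn ℝ U fun x => c * H x - F x)
    {a b : E} (ha : a ∈ U) (hb : b ∈ U) (hH : HasGradientAt H (h a) a)
    (hF : HasGradientAt F (f a) a) :
    |bregmanDist F f b a| ≤ c * bregmanDist H h b a := by
  have h₁ := hplus.bregmanDist_nonneg (g := fun x => c • h x + f x) ha hb <| by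
    rw [hasGradientAt_iff_hasFDerivAt, map_add, map_smul]
    exact (hH.hasFDerivAt.const_mul c).add hF.hasFDerivAt
  have h₂ := hminus.bregmanDist_nonneg (g := fun x => c • h x - f x) ha hb <| by
    rw [hasGradientAt_iff_hasFDerivAt, map_sub, map_smul]
    exact (hH.hasFDerivAt.const_mul c).sub hF.hasFDerivAt
  simp only [bregmanDist, inner_add_left, inner_sub_left, real_inner_smul_left] at h₁ h₂ ⊢
  rw [abs_le]
  constructor <;> linarith

lemma bregmanDist_le_of_gradient_lipschitz (hU : Convex ℝ U) {F : E → ℝ} {g : E → E} {L : ℝ}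
    (hF : ∀ x ∈ U, HasGradientAt F (g x) x)
    (hg : ∀ x ∈ U, ∀ y ∈ U, ‖g x - g y‖ ≤ L * ‖x - y‖) {x z : E} (hx : x ∈ U) (hz : z ∈ U) :
    bregmanDist F g z x ≤ L / 2 * ‖z - x‖ ^ 2 := by
  have hseg : ∀ t ∈ Icc (0 : ℝ) 1, lineMap x z t ∈ U := fun t ht => hU.lineMap_mem hx hz ht
  have hderiv : ∀ t ∈ Icc (0 : ℝ) 1,
      HasDerivAt (fun s => F (lineMap x z s)) ⟪g (lineMap x z t), z - x⟫ t :=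
    fun t ht => (hF _ (hseg t ht)).hasDerivAt_comp_lineMap
  have hslope : ∀ t ∈ Icc (0 : ℝ) 1,
      ⟪g (lineMap x z t), z - x⟫ ≤ ⟪g x, z - x⟫ + L * t * ‖z - x‖ ^ 2 := by
    intro t ht
    have hdist : ‖lineMap x z t - x‖ = t * ‖z - x‖ := by
      rw [← vsub_eq_sub, lineMap_vsub_left, vsub_eq_sub, norm_smul, Real.norm_of_nonneg ht.1]
    calc ⟪g (lineMap x z t), z - x⟫ = ⟪g x, z - x⟫ + ⟪g (lineMap x z t) - g x, z - x⟫ := by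
          rw [inner_sub_left]; ring
      _ ≤ ⟪g x, z - x⟫ + ‖g (lineMap x z t) - g x‖ * ‖z - x‖ := by
          gcongr; exact real_inner_le_norm _ _
      _ ≤ ⟪g x, z - x⟫ + L * (t * ‖z - x‖) * ‖z - x‖ := by
          gcongr; rw [← hdist]; exact hg _ (hseg t ht) _ hx
      _ = ⟪g x, z - x⟫ + L * t * ‖z - x‖ ^ 2 := by ring
  have hbound := image_le_of_deriv_right_le_deriv_boundary
    (f := fun s => F (lineMap x z s))
    (B := fun t => F x + t * ⟪g x, z - x⟫ + L / 2 * t ^ 2 * ‖z - x‖ ^ 2)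
    (fun t ht => (hderiv t ht).continuousAt.continuousWithinAt)
    (fun t ht => (hderiv t (Ico_subset_Icc_self ht)).hasDerivWithinAt)
    (by simp) (by fun_prop)
    (fun t _ => by
      have := (((hasDerivAt_id' t).mul_const ⟪g x, z - x⟫).const_add (F x)).add
        (((hasDerivAt_pow 2 t).const_mul (L / 2)).mul_const (‖z - x‖ ^ 2))
      exact (this.congr_deriv (by push_cast; ring)).hasDerivWithinAt)
    (fun t ht => hslope t (Ico_subset_Icc_self ht)) (right_mem_Icc.2 zero_le_one)
  simp only [lineMap_apply_one, one_pow, one_mul] at hbound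
  rw [bregmanDist]
  linarith

end Gradient

section Cocoercive

variable {P : E → ℝ} {q : E → E} {L : ℝ}

lemma sub_add_inner_add_mul_sq_le_of_bregmanDist_bounds
    (hlow : ∀ a ∈ U, ∀ b ∈ U, 0 ≤ bregmanDist P q b a)
    (hup : ∀ a ∈ U, ∀ b ∈ U, bregmanDist P q b a ≤ L / 2 * ‖b - a‖ ^ 2)
    {a b : E} {t : ℝ} (ha : a ∈ U) (hb : b ∈ U) (hz : b + t • (q a - q b) ∈ U) :
    P a - P b + ⟪q a, b - a⟫ + t * ‖q a - q b‖ ^ 2 ≤ L / 2 * (t ^ 2 * ‖q a - q b‖ ^ 2) := by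
  have h₁ := hlow a ha _ hz
  have h₂ := hup b hb _ hz
  simp only [bregmanDist, add_sub_cancel_left, norm_smul, mul_pow, Real.norm_eq_abs, sq_abs,
    inner_smul_right] at h₁ h₂
  have hza : b + t • (q a - q b) - a = (b - a) + t • (q a - q b) := by abel
  rw [hza, inner_add_right, real_inner_smul_right] at h₁
  have hw : ⟪q a, q a - q b⟫ - ⟪q b, q a - q b⟫ = ‖q a - q b‖ ^ 2 := by
    rw [← inner_sub_left, real_inner_self_eq_norm_sq]
  linear_combination h₁ + h₂ - t * hw

-- An a priori bound that keeps the test points of the cocoercivity estimate inside `U`.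
lemma norm_sub_le_of_bregmanDist_bounds
    (hlow : ∀ a ∈ U, ∀ b ∈ U, 0 ≤ bregmanDist P q b a)
    (hup : ∀ a ∈ U, ∀ b ∈ U, bregmanDist P q b a ≤ L / 2 * ‖b - a‖ ^ 2) (hL : 0 ≤ L)
    {x y : E} (hx : x ∈ U) (hball : closedBall y ‖x - y‖ ⊆ U) :
    ‖q x - q y‖ ≤ L * ‖x - y‖ := by
  set d := ‖x - y‖
  set w := q x - q y with hw_def
  rcases eq_or_ne w 0 with hw | hw
  · rw [hw, norm_zero]
    positivity
  have hy : y ∈ U := hball (mem_closedBall_self (norm_nonneg _))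
  have hw₀ : 0 < ‖w‖ := norm_pos_iff.2 hw
  have hz : y + (d / ‖w‖) • w ∈ U := hball <| by
    rw [mem_closedBall, dist_eq_norm, add_sub_cancel_left, norm_smul,
      Real.norm_of_nonneg (by positivity), div_mul_cancel₀ d hw₀.ne']
  have hstep := sub_add_inner_add_mul_sq_le_of_bregmanDist_bounds hlow hup hx hy hz
  rw [← hw_def] at hstep
  have hxy := hup x hx y hy
  rw [bregmanDist, norm_sub_rev] at hxy
  have hd : 0 < d := by
    by_contra! hd
    have : x = y := sub_eq_zero.1 (norm_le_zero_iff.1 hd)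
    exact hw (by simp [w, this])
  have e₁ : d / ‖w‖ * ‖w‖ ^ 2 = d * ‖w‖ := by field_simp
  have e₂ : (d / ‖w‖) ^ 2 * ‖w‖ ^ 2 = d ^ 2 := by field_simp
  have : d * ‖w‖ ≤ d * (L * d) := by linear_combination hstep + hxy - e₁ + L / 2 * e₂
  exact le_of_mul_le_mul_left this hd

lemma sq_norm_sub_le_mul_inner_of_bregmanDist_bounds
    (hlow : ∀ a ∈ U, ∀ b ∈ U, 0 ≤ bregmanDist P q b a)
    (hup : ∀ a ∈ U, ∀ b ∈ U, bregmanDist P q b a ≤ L / 2 * ‖b - a‖ ^ 2) (hL : 0 < L)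
    {x y : E} (hx : x ∈ U) (hy : y ∈ U) (hzx : y + L⁻¹ • (q x - q y) ∈ U)
    (hzy : x + L⁻¹ • (q y - q x) ∈ U) :
    ‖q x - q y‖ ^ 2 ≤ L * ⟪q x - q y, x - y⟫ := by
  have h₁ := sub_add_inner_add_mul_sq_le_of_bregmanDist_bounds hlow hup hx hy hzx
  have h₂ := sub_add_inner_add_mul_sq_le_of_bregmanDist_bounds hlow hup hy hx hzy
  rw [norm_sub_rev (q y)] at h₂
  have hinner : ⟪q x, y - x⟫ + ⟪q y, x - y⟫ = -⟪q x - q y, x - y⟫ := by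
    rw [inner_sub_left, ← neg_sub x y, inner_neg_right]
    ring
  have hL₂ : L / 2 * (L⁻¹ ^ 2 * ‖q x - q y‖ ^ 2) = L⁻¹ / 2 * ‖q x - q y‖ ^ 2 := by field_simp
  have hinv : L⁻¹ * ‖q x - q y‖ ^ 2 ≤ ⟪q x - q y, x - y⟫ := by linarith
  have := mul_le_mul_of_nonneg_left hinv hL.le
  rwa [← mul_assoc, mul_inv_cancel₀ hL.ne', one_mul] at this

end Cocoercive

lemma norm_sub_le_of_abs_bregmanDist_le_of_closedBall_subset {F : E → ℝ} {g : E → E} {M : ℝ}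
    (hM : 0 < M) (hF : ∀ a ∈ U, ∀ b ∈ U, |bregmanDist F g b a| ≤ M / 2 * ‖b - a‖ ^ 2)
    {x y : E} (hx : closedBall x ‖x - y‖ ⊆ U) (hy : closedBall y ‖x - y‖ ⊆ U) :
    ‖g x - g y‖ ≤ M * ‖x - y‖ := by
  set P : E → ℝ := fun z => M / 2 * ‖z‖ ^ 2 - F z
  set q : E → E := fun z => M • z - g z
  have hP : ∀ a b, bregmanDist P q b a = M / 2 * ‖b - a‖ ^ 2 - bregmanDist F g b a := by
    intro a b
    simp only [P, q, bregmanDist, inner_sub_left, real_inner_smul_left, norm_sub_sq_real,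
      inner_sub_right, real_inner_self_eq_norm_sq, real_inner_comm a b]
    ring
  have hlow : ∀ a ∈ U, ∀ b ∈ U, 0 ≤ bregmanDist P q b a := fun a ha b hb => by
    rw [hP]; linarith [le_abs_self (bregmanDist F g b a), hF a ha b hb]
  have hup : ∀ a ∈ U, ∀ b ∈ U, bregmanDist P q b a ≤ 2 * M / 2 * ‖b - a‖ ^ 2 :=
    fun a ha b hb => by rw [hP]; linarith [neg_abs_le (bregmanDist F g b a), hF a ha b hb]
  have hxU : x ∈ U := hx (mem_closedBall_self (norm_nonneg _))
  have hyU : y ∈ U := hy (mem_closedBall_self (norm_nonneg _))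
  have hw : ‖q x - q y‖ ≤ 2 * M * ‖x - y‖ :=
    norm_sub_le_of_bregmanDist_bounds hlow hup (by positivity) hxU hy
  have hnear : ‖(2 * M)⁻¹ • (q x - q y)‖ ≤ ‖x - y‖ := by
    rwa [norm_smul, Real.norm_of_nonneg (by positivity), inv_mul_le_iff₀ (by positivity)]
  have hz₁ : y + (2 * M)⁻¹ • (q x - q y) ∈ U := hy <| by
    rwa [mem_closedBall, dist_eq_norm, add_sub_cancel_left]
  have hz₂ : x + (2 * M)⁻¹ • (q y - q x) ∈ U := hx <| by
    rwa [mem_closedBall, dist_eq_norm, add_sub_cancel_left, ← neg_sub, smul_neg, norm_neg]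
  have hcoco := sq_norm_sub_le_mul_inner_of_bregmanDist_bounds hlow hup (by positivity)
    hxU hyU hz₁ hz₂
  have hg : g x - g y = M • (x - y) - (q x - q y) := by
    simp only [q, smul_sub]
    abel
  have hsq : ‖g x - g y‖ ^ 2 ≤ (M * ‖x - y‖) ^ 2 := by
    rw [hg, norm_sub_sq_real, norm_smul, real_inner_smul_left, Real.norm_of_nonneg hM.le,
      real_inner_comm]
    nlinarith
  exact le_of_pow_le_pow_left₀ two_ne_zero (by positivity) hsq

theorem Convex.norm_sub_le_of_abs_bregmanDist_le (hU : Convex ℝ U) (hUo : IsOpen U)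
    {F : E → ℝ} {g : E → E} {M : ℝ} (hM : 0 ≤ M)
    (hF : ∀ a ∈ U, ∀ b ∈ U, |bregmanDist F g b a| ≤ M / 2 * ‖b - a‖ ^ 2)
    {x y : E} (hx : x ∈ U) (hy : y ∈ U) : ‖g x - g y‖ ≤ M * ‖x - y‖ := by
  -- The local estimate needs `0 < M`; prove it for every `M' > M` and let `M' → M`.
  have hlarger : ∀ M' ∈ Ioi M, ‖g x - g y‖ ≤ M' * ‖x - y‖ := by
    intro M' hM'
    have hF' : ∀ a ∈ U, ∀ b ∈ U, |bregmanDist F g b a| ≤ M' / 2 * ‖b - a‖ ^ 2 :=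
      fun a ha b hb => (hF a ha b hb).trans (by gcongr; exact le_of_lt hM')
    simpa only [dist_eq_norm] using hU.dist_le_mul_dist_of_closedBall_subset hUo (g := g)
      (fun a b ha hb => by
        simp only [dist_eq_norm] at ha hb ⊢
        exact norm_sub_le_of_abs_bregmanDist_le_of_closedBall_subset
          (hM.trans_lt (mem_Ioi.1 hM')) hF' ha hb) hx hy
  exact ge_of_tendsto (((continuous_id.mul continuous_const).tendsto M).mono_left
    nhdsWithin_le_nhds) (eventually_nhdsWithin_of_forall hlarger)

end Bregman

section ERealTransfer

variable {n : ℕ}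

lemma ERealProper.coe_toReal {h : Rn n → EReal} (hh : ERealProper h) {x : Rn n}
    (hx : x ∈ edom h) : ((h x).toReal : EReal) = h x :=
  EReal.coe_toReal (ne_of_lt hx) (hh.2 x)

lemma ERealConvexOn.convexOn {s U : Set (Rn n)} {φ : Rn n → EReal} {ψ : Rn n → ℝ}
    (hφ : ERealConvexOn s φ) (hU : Convex ℝ U) (hUs : U ⊆ s) (hψ : ∀ x ∈ U, φ x = ψ x) :
    ConvexOn ℝ U ψ := by
  refine ⟨hU, fun x hx y hy a b ha hb hab => ?_⟩
  have h := hφ (hUs hx) (hUs hy) ha hb hab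
  rw [hψ _ hx, hψ _ hy, hψ _ (hU hx hy ha hb hab)] at h
  exact_mod_cast h

end ERealTransfer

theorem stmt0_gradient_lipschitz_of_relSmooth
    {n : ℕ} (h f : Rn n → EReal) (h' f' : Rn n → Rn n) (Lf Lt : ℝ)
    (hLeg : LegendreKernel h h') (hLf : 0 ≤ Lf) (hRel : RelSmooth h f Lf)
    (hf' : ∀ x ∈ interior (edom h), HasGradientAt (fun y => (f y).toReal) (f' x) x)
    (U : Set (Rn n)) (hUopen : IsOpen U) (hUconv : Convex ℝ U)
    (hUC : U ⊆ interior (edom h)) (hLt : 0 ≤ Lt)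
    (hLip : ∀ x ∈ U, ∀ y ∈ U, ‖h' x - h' y‖ ≤ Lt * ‖x - y‖) :
    ∀ x ∈ U, ∀ y ∈ U, ‖f' x - f' y‖ ≤ Lf * Lt * ‖x - y‖ := by
  set H : Rn n → ℝ := fun x => (h x).toReal
  set F : Rn n → ℝ := fun x => (f x).toReal
  have hdom : ∀ x ∈ U, x ∈ edom h := fun x hx => interior_subset (hUC hx)
  have hHF : ∀ x ∈ U, h x = H x ∧ f x = F x := fun x hx =>
    ⟨(hLeg.proper.coe_toReal (hdom x hx)).symm,
      (hRel.1.coe_toReal (hRel.2.2.1 (hdom x hx))).symm⟩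
  have hplus : ConvexOn ℝ U fun x => Lf * H x + F x :=
    hRel.2.2.2.1.convexOn hUconv hUC fun x hx => by rw [(hHF x hx).1, (hHF x hx).2]; norm_cast
  have hminus : ConvexOn ℝ U fun x => Lf * H x - F x :=
    hRel.2.2.2.2.convexOn hUconv hUC fun x hx => by rw [(hHF x hx).1, (hHF x hx).2]; norm_cast
  have hH : ∀ x ∈ U, HasGradientAt H (h' x) x := fun x hx => hLeg.differentiable x (hUC hx)
  have hbreg : ∀ a ∈ U, ∀ b ∈ U, |bregmanDist F f' b a| ≤ Lf * Lt / 2 * ‖b - a‖ ^ 2 := by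
    intro a ha b hb
    calc |bregmanDist F f' b a| ≤ Lf * bregmanDist H h' b a :=
          abs_bregmanDist_le_mul_of_convexOn_add_sub hplus hminus ha hb (hH a ha)
            (hf' a (hUC ha))
      _ ≤ Lf * (Lt / 2 * ‖b - a‖ ^ 2) := by
          gcongr; exact bregmanDist_le_of_gradient_lipschitz hUconv hH hLip ha hb
      _ = Lf * Lt / 2 * ‖b - a‖ ^ 2 := by ring
  exact fun x hx y hy =>
    hUconv.norm_sub_le_of_abs_bregmanDist_le hUopen (by positivity) hbreg hx hy
end

section
/- Let h be a Legendre kernel on ℝⁿ with C := int dom h and let f : ℝⁿ → ℝ∪{+∞} be proper, lsc, with dom f ⊇ dom h and differentiable on C. Then the following are equivalent: (a) L_f·h + f and L_f·h − f are convex on C; (b) |f(y) − f(x) − ⟨∇f(x), y − x⟩| ≤ L_f·D_h(y,x) for all x, y ∈ C; (c) |⟨∇f(x) − ∇f(y), x − y⟩| ≤ L_f·⟨∇h(x) − ∇h(y), x − y⟩ for all x, y ∈ C. -/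
open Filter Topology Set Bornology
open scoped RealInnerProductSpace

/-!
On `C = int dom h`, which is convex because `h` is, both `h` and `f` are finite, so (a) says
that the real functions `Lf·h + f` and `Lf·h − f` are convex on `C`. For a function with a
gradient on a convex set, convexity is equivalent to the gradient inequality (restrict to a
segment), and the gradient inequality to monotonicity of the gradient (add it for `(x, y)` and
`(y, x)`; conversely apply the mean value theorem on the segment). For `Lf·h ± f` the two
gradient inequalities are exactly the two halves of the absolute-value bound (b), and the two
monotonicity conditions the two halves of (c).
-/

open AffineMap

section FirstOrderConvexity

variable {E : Type*} [NormedAddCommGroup E] [InnerProductSpace ℝ E]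
  {s : Set E} {f g : E → ℝ} {f' : E → E} {x y u v : E}

theorem ConvexOn.of_inner_gradient_le_sub (hs : Convex ℝ s)
    (hf : ∀ x ∈ s, ∀ y ∈ s, ⟪f' x, y - x⟫ ≤ f y - f x) : ConvexOn ℝ s f := by
  refine ⟨hs, fun x hx y hy a b ha hb hab => ?_⟩
  set z := a • x + b • y
  have hz : z ∈ s := hs hx hy ha hb hab
  have hbary : a • (x - z) + b • (y - z) = 0 := by
    linear_combination (norm := module) (-hab) • z
  have hzx := hf z hz x hx
  have hzy := hf z hz y hy
  calc f z = f z + ⟪f' z, a • (x - z) + b • (y - z)⟫ := by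
        rw [hbary, inner_zero_right, add_zero]
    _ = a * (f z + ⟪f' z, x - z⟫) + b * (f z + ⟪f' z, y - z⟫) := by
      rw [inner_add_right, real_inner_smul_right, real_inner_smul_right]
      linear_combination (-f z) * hab
    _ ≤ a • f x + b • f y := by
      rw [smul_eq_mul, smul_eq_mul]
      gcongr <;> linarith

section LinearCombination

variable {a b : E → ℝ} {a' b' : E → E} (c : ℝ)

theorem abs_sub_sub_inner_le_iff :
    |b y - b x - ⟪b' x, y - x⟫| ≤ c * (a y - a x - ⟪a' x, y - x⟫) ↔
      ⟪c • a' x + b' x, y - x⟫ ≤ (c * a y + b y) - (c * a x + b x) ∧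
      ⟪c • a' x - b' x, y - x⟫ ≤ (c * a y - b y) - (c * a x - b x) := by
  rw [abs_le, inner_add_left, inner_sub_left, real_inner_smul_left]
  constructor <;> rintro ⟨h₁, h₂⟩ <;> constructor <;> linarith

theorem abs_inner_sub_le_iff :
    |⟪b' x - b' y, x - y⟫| ≤ c * ⟪a' x - a' y, x - y⟫ ↔
      0 ≤ ⟪(c • a' x + b' x) - (c • a' y + b' y), x - y⟫ ∧
      0 ≤ ⟪(c • a' x - b' x) - (c • a' y - b' y), x - y⟫ := by
  simp only [abs_le, inner_add_left, inner_sub_left, real_inner_smul_left]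
  constructor <;> rintro ⟨h₁, h₂⟩ <;> constructor <;> linarith

end LinearCombination

variable [CompleteSpace E]

theorem HasGradientAt.add (hf : HasGradientAt f u x) (hg : HasGradientAt g v x) :
    HasGradientAt (fun z => f z + g z) (u + v) x := by
  rw [hasGradientAt_iff_hasFDerivAt, map_add]
  exact (hasGradientAt_iff_hasFDerivAt.mp hf).add (hasGradientAt_iff_hasFDerivAt.mp hg)

theorem HasGradientAt.sub (hf : HasGradientAt f u x) (hg : HasGradientAt g v x) :
    HasGradientAt (fun z => f z - g z) (u - v) x := by
  rw [hasGradientAt_iff_hasFDerivAt, map_sub]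
  exact (hasGradientAt_iff_hasFDerivAt.mp hf).sub (hasGradientAt_iff_hasFDerivAt.mp hg)

theorem HasGradientAt.const_mul (c : ℝ) (hf : HasGradientAt f u x) :
    HasGradientAt (fun z => c * f z) (c • u) x := by
  rw [hasGradientAt_iff_hasFDerivAt] at hf ⊢
  simpa using hf.const_mul c

theorem HasGradientAt.hasDerivAt_comp_lineMap_s1 {t : ℝ} (hf : HasGradientAt f v (lineMap x y t)) :
    HasDerivAt (f ∘ lineMap x y) ⟪v, y - x⟫ t := by
  simpa using (hasGradientAt_iff_hasFDerivAt.mp hf).comp_hasDerivAt t hasDerivAt_lineMap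

theorem ConvexOn.inner_le_sub_of_hasGradientAt (hf : ConvexOn ℝ s f) (hx : x ∈ s) (hy : y ∈ s)
    (hv : HasGradientAt f v x) : ⟪v, y - x⟫ ≤ f y - f x := by
  have hline : ConvexOn ℝ (lineMap x y ⁻¹' s) (f ∘ lineMap x y) := hf.comp_affineMap _
  have hv₀ : HasGradientAt f v (lineMap x y (0 : ℝ)) := by simpa using hv
  simpa [slope_def_field] using
    hline.le_slope_of_hasDerivAt (by simpa) (by simpa) one_pos hv₀.hasDerivAt_comp_lineMap_s1

theorem inner_gradient_le_sub_of_monotone (hs : Convex ℝ s)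
    (hf : ∀ x ∈ s, HasGradientAt f (f' x) x)
    (hmono : ∀ x ∈ s, ∀ y ∈ s, 0 ≤ ⟪f' x - f' y, x - y⟫)
    (hx : x ∈ s) (hy : y ∈ s) :
    ⟪f' x, y - x⟫ ≤ f y - f x := by
  have hseg : ∀ t ∈ Icc (0 : ℝ) 1, lineMap x y t ∈ s := fun t ht => hs.lineMap_mem hx hy ht
  have hderiv : ∀ t ∈ Icc (0 : ℝ) 1,
      HasDerivAt (f ∘ lineMap x y) ⟪f' (lineMap x y t), y - x⟫ t :=
    fun t ht => (hf _ (hseg t ht)).hasDerivAt_comp_lineMap_s1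
  obtain ⟨c, hc, hslope⟩ := exists_hasDerivAt_eq_slope (f ∘ lineMap x y) _ one_pos
    (fun t ht => (hderiv t ht).continuousAt.continuousWithinAt)
    (fun t ht => hderiv t (Ioo_subset_Icc_self ht))
  simp only [Function.comp_apply, lineMap_apply_one, lineMap_apply_zero, sub_zero, div_one]
    at hslope
  have hmono_c := hmono _ (hseg c (Ioo_subset_Icc_self hc)) x hx
  rw [← vsub_eq_sub (lineMap x y c), lineMap_vsub_left, vsub_eq_sub, real_inner_smul_right,
    inner_sub_left, mul_nonneg_iff_of_pos_left hc.1] at hmono_c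
  linarith

theorem convexOn_iff_forall_inner_gradient_le_sub (hs : Convex ℝ s)
    (hf : ∀ x ∈ s, HasGradientAt f (f' x) x) :
    ConvexOn ℝ s f ↔ ∀ x ∈ s, ∀ y ∈ s, ⟪f' x, y - x⟫ ≤ f y - f x :=
  ⟨fun hc _ hx _ hy => hc.inner_le_sub_of_hasGradientAt hx hy (hf _ hx),
    ConvexOn.of_inner_gradient_le_sub hs⟩

theorem forall_inner_gradient_le_sub_iff_monotone (hs : Convex ℝ s)
    (hf : ∀ x ∈ s, HasGradientAt f (f' x) x) :
    (∀ x ∈ s, ∀ y ∈ s, ⟪f' x, y - x⟫ ≤ f y - f x) ↔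
      ∀ x ∈ s, ∀ y ∈ s, 0 ≤ ⟪f' x - f' y, x - y⟫ := by
  refine ⟨fun h x hx y hy => ?_,
    fun h _ hx _ hy => inner_gradient_le_sub_of_monotone hs hf h hx hy⟩
  have hxy := h x hx y hy
  have hyx := h y hy x hx
  simp only [inner_sub_left, inner_sub_right] at hxy hyx ⊢
  linarith

variable {a b : E → ℝ} {a' b' : E → E} (c : ℝ)

theorem convexOn_const_mul_add_and_sub_iff (ha : ∀ x ∈ s, HasGradientAt a (a' x) x)
    (hb : ∀ x ∈ s, HasGradientAt b (b' x) x) (hs : Convex ℝ s) :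
    ConvexOn ℝ s (fun x => c * a x + b x) ∧ ConvexOn ℝ s (fun x => c * a x - b x) ↔
      ∀ x ∈ s, ∀ y ∈ s,
        |b y - b x - ⟪b' x, y - x⟫| ≤ c * (a y - a x - ⟪a' x, y - x⟫) := by
  rw [and_congr
    (convexOn_iff_forall_inner_gradient_le_sub hs
      fun x hx => ((ha x hx).const_mul c).add (hb x hx))
    (convexOn_iff_forall_inner_gradient_le_sub hs
      fun x hx => ((ha x hx).const_mul c).sub (hb x hx))]
  simp only [abs_sub_sub_inner_le_iff, imp_and, forall_and]

theorem forall_abs_sub_sub_inner_le_iff (ha : ∀ x ∈ s, HasGradientAt a (a' x) x)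
    (hb : ∀ x ∈ s, HasGradientAt b (b' x) x) (hs : Convex ℝ s) :
    (∀ x ∈ s, ∀ y ∈ s,
        |b y - b x - ⟪b' x, y - x⟫| ≤ c * (a y - a x - ⟪a' x, y - x⟫)) ↔
      ∀ x ∈ s, ∀ y ∈ s, |⟪b' x - b' y, x - y⟫| ≤ c * ⟪a' x - a' y, x - y⟫ := by
  simp only [abs_sub_sub_inner_le_iff, abs_inner_sub_le_iff, imp_and, forall_and]
  exact and_congr
    (forall_inner_gradient_le_sub_iff_monotone hs
      fun x hx => ((ha x hx).const_mul c).add (hb x hx))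
    (forall_inner_gradient_le_sub_iff_monotone hs
      fun x hx => ((ha x hx).const_mul c).sub (hb x hx))

end FirstOrderConvexity

section ExtendedReal

variable {n : ℕ} {φ : Rn n → EReal}

theorem coe_toReal_of_mem_edom (hφ : ERealProper φ) {x : Rn n} (hx : x ∈ edom φ) :
    ((φ x).toReal : EReal) = φ x :=
  EReal.coe_toReal hx.ne (hφ.2 x)

theorem convex_edom (hφ : ERealProper φ) (hc : ERealConvexOn univ φ) : Convex ℝ (edom φ) := by
  intro x hx y hy a b ha hb hab
  have hxy := hc (mem_univ x) (mem_univ y) ha hb hab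
  rw [← coe_toReal_of_mem_edom hφ hx, ← coe_toReal_of_mem_edom hφ hy] at hxy
  exact hxy.trans_lt (by exact_mod_cast EReal.coe_lt_top _)

theorem erealConvexOn_iff_convexOn {s : Set (Rn n)} (hs : Convex ℝ s) {ψ : Rn n → ℝ}
    (hφψ : ∀ x ∈ s, φ x = ψ x) : ERealConvexOn s φ ↔ ConvexOn ℝ s ψ := by
  refine ⟨fun hφ => ⟨hs, fun x hx y hy a b ha hb hab => ?_⟩,
    fun hψ x hx y hy a b ha hb hab => ?_⟩
  · have hxy := hφ hx hy ha hb hab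
    rw [hφψ _ (hs hx hy ha hb hab), hφψ x hx, hφψ y hy] at hxy
    exact_mod_cast hxy
  · rw [hφψ _ (hs hx hy ha hb hab), hφψ x hx, hφψ y hy]
    exact_mod_cast hψ.2 hx hy ha hb hab

end ExtendedReal

theorem stmt1_relSmooth_characterizations_general
    {n : ℕ} (h f : Rn n → EReal) (h' f' : Rn n → Rn n) (Lf : ℝ)
    (hLeg : LegendreKernel h h')
    (hfp : ERealProper f) (hdom : edom h ⊆ edom f)
    (hf' : ∀ x ∈ interior (edom h), HasGradientAt (fun y => (f y).toReal) (f' x) x) :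
    ((ERealConvexOn (interior (edom h)) (fun x => (Lf : EReal) * h x + f x) ∧
      ERealConvexOn (interior (edom h)) (fun x => (Lf : EReal) * h x - f x))
      ↔ (∀ x ∈ interior (edom h), ∀ y ∈ interior (edom h),
          |(f y).toReal - (f x).toReal - ⟪f' x, y - x⟫|
            ≤ Lf * ((h y).toReal - (h x).toReal - ⟪h' x, y - x⟫)))
    ∧
    ((∀ x ∈ interior (edom h), ∀ y ∈ interior (edom h),
          |(f y).toReal - (f x).toReal - ⟪f' x, y - x⟫|
            ≤ Lf * ((h y).toReal - (h x).toReal - ⟪h' x, y - x⟫))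
      ↔ (∀ x ∈ interior (edom h), ∀ y ∈ interior (edom h),
          |⟪f' x - f' y, x - y⟫| ≤ Lf * ⟪h' x - h' y, x - y⟫)) := by
  have hC : Convex ℝ (interior (edom h)) := (convex_edom hLeg.proper hLeg.convex).interior
  have hh : ∀ x ∈ interior (edom h), ((h x).toReal : EReal) = h x :=
    fun x hx => coe_toReal_of_mem_edom hLeg.proper (interior_subset hx)
  have hf : ∀ x ∈ interior (edom h), ((f x).toReal : EReal) = f x :=
    fun x hx => coe_toReal_of_mem_edom hfp (hdom (interior_subset hx))
  rw [erealConvexOn_iff_convexOn hC (ψ := fun x => Lf * (h x).toReal + (f x).toReal)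
      fun x hx => by rw [EReal.coe_add, EReal.coe_mul, hh x hx, hf x hx],
    erealConvexOn_iff_convexOn hC (ψ := fun x => Lf * (h x).toReal - (f x).toReal)
      fun x hx => by rw [EReal.coe_sub, EReal.coe_mul, hh x hx, hf x hx]]
  exact ⟨convexOn_const_mul_add_and_sub_iff Lf hLeg.differentiable hf' hC,
    forall_abs_sub_sub_inner_le_iff Lf hLeg.differentiable hf' hC⟩

theorem stmt1_relSmooth_characterizations
    {n : ℕ} (h f : Rn n → EReal) (h' f' : Rn n → Rn n) (Lf : ℝ)
    (hLeg : LegendreKernel h h') (hLf : 0 ≤ Lf)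
    (hfp : ERealProper f) (hflsc : LowerSemicontinuous f) (hdom : edom h ⊆ edom f)
    (hf' : ∀ x ∈ interior (edom h), HasGradientAt (fun y => (f y).toReal) (f' x) x) :
    ((ERealConvexOn (interior (edom h)) (fun x => (Lf : EReal) * h x + f x) ∧
      ERealConvexOn (interior (edom h)) (fun x => (Lf : EReal) * h x - f x))
      ↔ (∀ x ∈ interior (edom h), ∀ y ∈ interior (edom h),
          |(f y).toReal - (f x).toReal - ⟪f' x, y - x⟫|
            ≤ Lf * ((h y).toReal - (h x).toReal - ⟪h' x, y - x⟫)))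
    ∧
    ((∀ x ∈ interior (edom h), ∀ y ∈ interior (edom h),
          |(f y).toReal - (f x).toReal - ⟪f' x, y - x⟫|
            ≤ Lf * ((h y).toReal - (h x).toReal - ⟪h' x, y - x⟫))
      ↔ (∀ x ∈ interior (edom h), ∀ y ∈ interior (edom h),
          |⟪f' x - f' y, x - y⟫| ≤ Lf * ⟪h' x - h' y, x - y⟫)) :=
  stmt1_relSmooth_characterizations_general h f h' f' Lf hLeg hfp hdom hf'
end

section
/- Under the standing assumptions, let γ ∈ (0, 1/L_f), σ > 0, and ε > 0. Let x⁰, x¹, …, x^K ∈ C and x̄ᵏ ∈ T_γ(xᵏ) for k = 0, …, K−1 be such that the descent inequality φ_γ(x^{k+1}) ≤ φ_γ(xᵏ) − σ·D_h(x̄ᵏ, xᵏ) holds for all k = 0, …, K−1, and suppose D_h(x̄ᵏ, xᵏ) > ε for all k = 0, …, K−1. Then K ≤ (φ(x⁰) − inf_{cl C} φ)/(σε). -/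
open Filter Topology Set Bornology
open scoped RealInnerProductSpace

/-!
Along the iterates the envelope `φ_γ` drops by more than `σ ε` per step, so
`K σ ε ≤ φ_γ(x⁰) - φ_γ(xᴷ)`. Taking `z = x⁰` in the infimum gives `φ_γ(x⁰) ≤ φ(x⁰)`. For the
lower bound, the descent lemma `f z ≤ f x + ⟪∇f x, z - x⟫ + L_f D_h(z, x)` together with
`L_f ≤ 1/γ` and `D_h ≥ 0` shows that the forward-backward model at `x ∈ C` majorizes `φ` on
`dom h ⊆ cl C`, while it is `+∞` off `dom h`; hence `φ_γ(xᴷ) ≥ inf_{cl C} φ`.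
-/

open AffineMap

theorem ConvexOn.add_fderiv_sub_le {E : Type*} [NormedAddCommGroup E] [NormedSpace ℝ E]
    {S : Set E} {F : E → ℝ} {L : E →L[ℝ] ℝ} {p z : E} (hF : ConvexOn ℝ S F)
    (hp : p ∈ S) (hz : z ∈ S) (hL : HasFDerivAt F L p) :
    F p + L (z - p) ≤ F z := by
  have hseg : ConvexOn ℝ (lineMap (k := ℝ) p z ⁻¹' S) (F ∘ lineMap p z) := hF.comp_affineMap _
  have hderiv : HasDerivAt (F ∘ lineMap (k := ℝ) p z) (L (z - p)) 0 :=
    (by simpa using hL : HasFDerivAt F L (lineMap p z (0 : ℝ))).comp_hasDerivAt 0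
      hasDerivAt_lineMap
  have := hseg.le_slope_of_hasDerivAt (x := 0) (y := 1) (by simpa using hp) (by simpa using hz)
    zero_lt_one hderiv
  simpa [slope_def_field, le_sub_iff_add_le'] using this

theorem LowerSemicontinuousAt.le_of_forall_lineMap_le {E : Type*} [NormedAddCommGroup E]
    [NormedSpace ℝ E] {F : E → EReal} {p z : E} (hF : LowerSemicontinuousAt F z)
    {u : ℝ → ℝ} (hu : ContinuousAt u 1) (hle : ∀ t ∈ Ioo (0 : ℝ) 1, F (lineMap p z t) ≤ u t) :
    F z ≤ u 1 := by
  by_contra! hlt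
  obtain ⟨y, huy, hyF⟩ := EReal.lt_iff_exists_real_btwn.1 hlt
  have hF_ev : ∀ᶠ t in 𝓝[<] (1 : ℝ), (y : EReal) < F (lineMap p z t) := by
    have hline : Tendsto (lineMap p z) (𝓝[<] (1 : ℝ)) (𝓝 z) := by
      simpa using (lineMap_continuous.tendsto (1 : ℝ)).mono_left nhdsWithin_le_nhds
    exact hline.eventually (hF y hyF)
  have hu_ev : ∀ᶠ t in 𝓝[<] (1 : ℝ), u t < y :=
    (hu.eventually (gt_mem_nhds (EReal.coe_lt_coe_iff.1 huy))).filter_mono nhdsWithin_le_nhds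
  have hI_ev : ∀ᶠ t in 𝓝[<] (1 : ℝ), t ∈ Ioo (0 : ℝ) 1 :=
    Ioo_mem_nhdsLT_of_mem ⟨zero_lt_one, le_rfl⟩
  obtain ⟨t, hFt, hut, ht⟩ := (hF_ev.and (hu_ev.and hI_ev)).exists
  exact (hFt.trans_le (hle t ht)).not_gt (EReal.coe_lt_coe_iff.2 hut)

theorem EReal.add_natCast_mul_le_of_forall_add_le {u : ℕ → EReal} {c : ℝ} {K : ℕ}
    (hstep : ∀ k < K, u (k + 1) + c ≤ u k) : u K + ((K * c : ℝ) : EReal) ≤ u 0 := by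
  induction K with
  | zero => simp
  | succ K ih =>
    calc u (K + 1) + (((K + 1 : ℕ) * c : ℝ) : EReal)
        = (u (K + 1) + c) + ((K * c : ℝ) : EReal) := by
          rw [add_assoc, ← EReal.coe_add]; congr 2; push_cast; ring
      _ ≤ u K + ((K * c : ℝ) : EReal) := by gcongr; exact hstep K K.lt_succ_self
      _ ≤ u 0 := ih fun k hk => hstep k (hk.trans K.lt_succ_self)

theorem EReal.add_mul_le_of_le_sub_mul {a b d : EReal} {σ ε : ℝ} (hσ : 0 ≤ σ)
    (hle : a ≤ b - σ * d) (hε : (ε : EReal) < d) : a + ((σ * ε : ℝ) : EReal) ≤ b :=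
  calc a + ((σ * ε : ℝ) : EReal) ≤ (b - ((σ * ε : ℝ) : EReal)) + ((σ * ε : ℝ) : EReal) := by
        gcongr
        exact hle.trans (EReal.sub_le_sub le_rfl (by
          rw [EReal.coe_mul]; exact mul_le_mul_of_nonneg_left hε.le (by exact_mod_cast hσ)))
    _ = b := EReal.sub_add_cancel

section Bregman

variable {n : ℕ}

theorem ERealConvexOn.convexOn_of_eq_coe {S : Set (Rn n)} {F : Rn n → EReal} {G : Rn n → ℝ}
    (hF : ERealConvexOn S F) (hS : Convex ℝ S) (hFG : ∀ w ∈ S, F w = G w) :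
    ConvexOn ℝ S G := by
  refine ⟨hS, fun p hp q hq a b ha hb hab => ?_⟩
  have hcomb := hF hp hq ha hb hab
  rw [hFG p hp, hFG q hq, hFG _ (hS hp hq ha hb hab), ← EReal.coe_mul, ← EReal.coe_mul,
    ← EReal.coe_add, EReal.coe_le_coe_iff] at hcomb
  exact hcomb

theorem ERealConvexOn.convex_edom {F : Rn n → EReal} (hF : ERealConvexOn univ F) :
    Convex ℝ (edom F) := by
  have hmul : ∀ {a : ℝ} {w}, 0 ≤ a → w ∈ edom F → (a : EReal) * F w ≠ ⊤ := fun ha hw =>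
    EReal.mul_ne_top _ _ |>.mpr ⟨.inl (EReal.coe_ne_bot _), .inl (EReal.coe_nonneg.2 ha),
      .inl (EReal.coe_ne_top _), .inr hw.ne⟩
  intro p hp q hq a b ha hb hab
  exact (hF (mem_univ p) (mem_univ q) ha hb hab).trans_lt
    (EReal.add_lt_top (hmul ha hp) (hmul hb hq))

theorem coe_toReal_of_mem_edom_s16 {F : Rn n → EReal} (hbot : ∀ w, F w ≠ ⊥) {w : Rn n}
    (hw : w ∈ edom F) : ((F w).toReal : EReal) = F w :=
  EReal.coe_toReal hw.ne (hbot w)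

/-- `Dbreg` read in `ℝ`; it agrees with `Dbreg` for `z ∈ dom h`, `x ∈ int dom h` and is junk
elsewhere. -/
noncomputable def bregReal (h : Rn n → EReal) (h' : Rn n → Rn n) (z x : Rn n) : ℝ :=
  (h z).toReal - (h x).toReal - ⟪h' x, z - x⟫

variable {h : Rn n → EReal} {h' : Rn n → Rn n}

theorem Dbreg_eq_coe_bregReal (hbot : ∀ w, h w ≠ ⊥) {z x : Rn n}
    (hx : x ∈ interior (edom h)) (hz : z ∈ edom h) :
    Dbreg h h' z x = bregReal h h' z x := by
  rw [Dbreg, if_pos hx, bregReal, EReal.coe_sub, EReal.coe_sub,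
    coe_toReal_of_mem_edom_s16 hbot hz, coe_toReal_of_mem_edom_s16 hbot (interior_subset hx)]

theorem Dbreg_eq_top (hbot : ∀ w, h w ≠ ⊥) {z x : Rn n}
    (hx : x ∈ interior (edom h)) (hz : z ∉ edom h) : Dbreg h h' z x = ⊤ := by
  have hz_top : h z = ⊤ := not_lt_top_iff.1 hz
  rw [Dbreg, if_pos hx, hz_top, ← coe_toReal_of_mem_edom_s16 hbot (interior_subset hx),
    EReal.top_sub_coe, EReal.top_sub_coe]

theorem Dbreg_self (hbot : ∀ w, h w ≠ ⊥) {x : Rn n} (hx : x ∈ interior (edom h)) :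
    Dbreg h h' x x = 0 := by
  simp [Dbreg_eq_coe_bregReal hbot hx (interior_subset hx), bregReal]

theorem LegendreKernel.convexOn_toReal (hLeg : LegendreKernel h h') :
    ConvexOn ℝ (edom h) (fun w => (h w).toReal) :=
  ERealConvexOn.convexOn_of_eq_coe (fun _ _ _ _ => hLeg.convex (mem_univ _) (mem_univ _))
    hLeg.convex.convex_edom fun _ hw => (coe_toReal_of_mem_edom_s16 hLeg.proper.2 hw).symm

theorem LegendreKernel.bregReal_nonneg (hLeg : LegendreKernel h h') {z x : Rn n}
    (hx : x ∈ interior (edom h)) (hz : z ∈ edom h) : 0 ≤ bregReal h h' z x := by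
  have := hLeg.convexOn_toReal.add_fderiv_sub_le (interior_subset hx) hz
    (hLeg.differentiable x hx).hasFDerivAt
  simp only [InnerProductSpace.toDual_apply_apply] at this
  unfold bregReal
  linarith

variable {f : Rn n → EReal} {f' : Rn n → Rn n} {Lf : ℝ} {p : Rn n}

theorem RelSmooth.descent_of_mem_interior (hRel : RelSmooth h f Lf)
    (hLeg : LegendreKernel h h') (hp : p ∈ interior (edom h))
    (hfp : HasGradientAt (fun y => (f y).toReal) (f' p) p) {w : Rn n}
    (hw : w ∈ interior (edom h)) :
    (f w).toReal ≤ (f p).toReal + ⟪f' p, w - p⟫ + Lf * bregReal h h' w p := by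
  have hψ : ConvexOn ℝ (interior (edom h)) (fun w => Lf * (h w).toReal - (f w).toReal) :=
    hRel.2.2.2.2.convexOn_of_eq_coe hLeg.convex.convex_edom.interior fun w hw => by
      rw [EReal.coe_sub, EReal.coe_mul, coe_toReal_of_mem_edom_s16 hLeg.proper.2 (interior_subset hw),
        coe_toReal_of_mem_edom_s16 hRel.1.2 (hRel.2.2.1 (interior_subset hw))]
  have := hψ.add_fderiv_sub_le hp hw
    (((hLeg.differentiable p hp).hasFDerivAt.const_mul Lf).sub hfp.hasFDerivAt)
  simp only [sub_apply, smul_apply, InnerProductSpace.toDual_apply_apply, smul_eq_mul] at this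
  unfold bregReal
  linarith

/-- The descent lemma extends from `int dom h` to `dom h` by lower semicontinuity of `f`
along the segment from `p`, on which `h` lies below its chord. -/
theorem RelSmooth.descent (hRel : RelSmooth h f Lf) (hLeg : LegendreKernel h h')
    (hLf : 0 ≤ Lf) (hp : p ∈ interior (edom h))
    (hfp : HasGradientAt (fun y => (f y).toReal) (f' p) p) {z : Rn n} (hz : z ∈ edom h) :
    (f z).toReal ≤ (f p).toReal + ⟪f' p, z - p⟫ + Lf * bregReal h h' z p := by
  set c := ⟪f' p, z - p⟫ + Lf * bregReal h h' z p
  have hseg : ∀ t ∈ Ioo (0 : ℝ) 1, f (lineMap p z t) ≤ (((f p).toReal + t * c : ℝ) : EReal) := by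
    intro t ht
    have hw : lineMap p z t ∈ interior (edom h) := by
      rw [lineMap_apply_module]
      exact hLeg.convex.convex_edom.combo_interior_self_mem_interior hp hz
        (sub_pos.2 ht.2) ht.1.le (by ring)
    have hchord : (h (lineMap p z t)).toReal ≤ (1 - t) * (h p).toReal + t * (h z).toReal := by
      simpa [lineMap_apply_module, smul_eq_mul] using
        hLeg.convexOn_toReal.2 (interior_subset hp) hz (sub_pos.2 ht.2).le ht.1.le (by ring)
    have hsub : lineMap p z t - p = t • (z - p) := lineMap_vsub_left p z t
    have hbreg : bregReal h h' (lineMap p z t) p ≤ t * bregReal h h' z p := by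
      simp only [bregReal, hsub, inner_smul_right]
      nlinarith
    have hdesc := hRel.descent_of_mem_interior hLeg hp hfp hw
    rw [hsub, inner_smul_right] at hdesc
    rw [← coe_toReal_of_mem_edom_s16 hRel.1.2 (hRel.2.2.1 (interior_subset hw)), EReal.coe_le_coe_iff]
    nlinarith [mul_le_mul_of_nonneg_left hbreg hLf]
  have := LowerSemicontinuousAt.le_of_forall_lineMap_le (hRel.2.1 z) (by fun_prop) hseg
  rw [← coe_toReal_of_mem_edom_s16 hRel.1.2 (hRel.2.2.1 hz), EReal.coe_le_coe_iff] at this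
  linarith

theorem LegendreKernel.edom_subset_closure_interior (hLeg : LegendreKernel h h') :
    edom h ⊆ closure (interior (edom h)) := by
  rw [hLeg.convex.convex_edom.closure_interior_eq_closure_of_nonempty_interior
    hLeg.nonemptyInterior]
  exact subset_closure

variable {g : Rn n → EReal} {γ : ℝ}

theorem fbEnv_le_of_mem_interior (hbot : ∀ w, h w ≠ ⊥) (hp : p ∈ interior (edom h)) :
    fbEnv h h' f f' g γ p ≤ f p + g p :=
  (iInf_le _ p).trans_eq (by simp [fbObj, Dbreg_self hbot hp])

theorem fbObj_eq_top (hbot : ∀ w, h w ≠ ⊥) (hf : ∀ w, f w ≠ ⊥) (hg : ∀ w, g w ≠ ⊥)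
    (hγ : 0 < γ) (hp : p ∈ interior (edom h)) {z : Rn n} (hz : z ∉ edom h) :
    fbObj h h' f f' g γ p z = ⊤ := by
  rw [fbObj, Dbreg_eq_top hbot hp hz, EReal.coe_mul_top_of_pos (one_div_pos.2 hγ)]
  exact EReal.add_top_of_ne_bot (by simp [EReal.add_eq_bot_iff, hf p, hg z])

theorem RelSmooth.le_fbObj (hRel : RelSmooth h f Lf) (hLeg : LegendreKernel h h')
    (hLf : 0 ≤ Lf) (hγ : 0 < γ) (hγL : γ * Lf < 1) (hp : p ∈ interior (edom h))
    (hfp : HasGradientAt (fun y => (f y).toReal) (f' p) p) {z : Rn n} (hz : z ∈ edom h) :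
    f z + g z ≤ fbObj h h' f f' g γ p z := by
  have hmodel : (f z).toReal ≤ (f p).toReal + ⟪f' p, z - p⟫ + 1 / γ * bregReal h h' z p := by
    have hLfγ : Lf ≤ 1 / γ := by rw [le_div_iff₀ hγ]; linarith
    linarith [hRel.descent hLeg hLf hp hfp hz,
      mul_le_mul_of_nonneg_right hLfγ (hLeg.bregReal_nonneg hp hz)]
  calc f z + g z = ((f z).toReal : EReal) + g z := by
        rw [coe_toReal_of_mem_edom_s16 hRel.1.2 (hRel.2.2.1 hz)]
    _ ≤ (((f p).toReal + ⟪f' p, z - p⟫ + 1 / γ * bregReal h h' z p : ℝ) : EReal) + g z := by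
        gcongr
    _ = fbObj h h' f f' g γ p z := by
        rw [fbObj, Dbreg_eq_coe_bregReal hLeg.proper.2 hp hz,
          ← coe_toReal_of_mem_edom_s16 hRel.1.2 (hRel.2.2.1 (interior_subset hp))]
        simp only [EReal.coe_add, EReal.coe_mul]
        ac_rfl

theorem RelSmooth.le_fbEnv (hRel : RelSmooth h f Lf) (hLeg : LegendreKernel h h')
    (hLf : 0 ≤ Lf) (hg : ∀ w, g w ≠ ⊥) (hγ : 0 < γ) (hγL : γ * Lf < 1)
    (hp : p ∈ interior (edom h)) (hfp : HasGradientAt (fun y => (f y).toReal) (f' p) p)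
    {m : EReal} (hm : ∀ y ∈ edom h, m ≤ f y + g y) : m ≤ fbEnv h h' f f' g γ p := by
  refine le_iInf fun z => ?_
  by_cases hz : z ∈ edom h
  · exact (hm z hz).trans (hRel.le_fbObj hLeg hLf hγ hγL hp hfp hz)
  · rw [fbObj_eq_top hLeg.proper.2 hRel.1.2 hg hγ hp hz]
    exact le_top

end Bregman

theorem stmt16_iteration_complexity_general
    {n : ℕ} (h : Rn n → EReal) (h' : Rn n → Rn n) (f : Rn n → EReal) (f' : Rn n → Rn n)
    (g : Rn n → EReal) (Lf γ σ ε : ℝ)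
    (hLeg : LegendreKernel h h') (hLf : 0 ≤ Lf) (hRel : RelSmooth h f Lf)
    (hf' : ∀ x ∈ interior (edom h), HasGradientAt (fun y => (f y).toReal) (f' x) x)
    (hg : ERealProper g)
    (hγ : 0 < γ) (hγL : γ * Lf < 1)
    (xm : Rn n) (hxmfin : f xm + g xm ≠ ⊤)
    (hmin : ∀ y ∈ closure (interior (edom h)), f xm + g xm ≤ f y + g y)
    (hσ : 0 < σ)
    (K : ℕ) (x xb : ℕ → Rn n)
    (hxC : ∀ k ≤ K, x k ∈ interior (edom h))
    (hdesc : ∀ k < K,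
      fbEnv h h' f f' g γ (x (k + 1))
        ≤ fbEnv h h' f f' g γ (x k) - ((σ : ℝ) : EReal) * Dbreg h h' (xb k) (x k))
    (hbig : ∀ k < K, ((ε : ℝ) : EReal) < Dbreg h h' (xb k) (x k)) :
    (((K : ℝ) * (σ * ε) : ℝ) : EReal) ≤ (f (x 0) + g (x 0)) - (f xm + g xm) := by
  have hlow : f xm + g xm ≤ fbEnv h h' f f' g γ (x K) :=
    hRel.le_fbEnv hLeg hLf hg.2 hγ hγL (hxC K le_rfl) (hf' _ (hxC K le_rfl))
      fun y hy => hmin y (hLeg.edom_subset_closure_interior hy)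
  have hup : fbEnv h h' f f' g γ (x 0) ≤ f (x 0) + g (x 0) :=
    fbEnv_le_of_mem_interior hLeg.proper.2 (hxC 0 K.zero_le)
  have htelescope := EReal.add_natCast_mul_le_of_forall_add_le
      (u := fun k => fbEnv h h' f f' g γ (x k)) fun k hk =>
    EReal.add_mul_le_of_le_sub_mul hσ.le (hdesc k hk) (hbig k hk)
  have hxm_bot : f xm + g xm ≠ ⊥ := by simp [EReal.add_eq_bot_iff, hRel.1.2 xm, hg.2 xm]
  rw [EReal.le_sub_iff_add_le (.inl hxm_bot) (.inl hxmfin), add_comm]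
  calc f xm + g xm + (((K : ℝ) * (σ * ε) : ℝ) : EReal)
      ≤ fbEnv h h' f f' g γ (x K) + (((K : ℝ) * (σ * ε) : ℝ) : EReal) := by gcongr
    _ ≤ fbEnv h h' f f' g γ (x 0) := htelescope
    _ ≤ f (x 0) + g (x 0) := hup

theorem stmt16_iteration_complexity
    {n : ℕ} (h : Rn n → EReal) (h' : Rn n → Rn n) (f : Rn n → EReal) (f' : Rn n → Rn n)
    (g : Rn n → EReal) (Lf γ σ ε : ℝ)
    (hLeg : LegendreKernel h h') (hLf : 0 ≤ Lf) (hRel : RelSmooth h f Lf)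
    (hf' : ∀ x ∈ interior (edom h), HasGradientAt (fun y => (f y).toReal) (f' x) x)
    (hg : ERealProper g) (hglsc : LowerSemicontinuous g)
    (hγ : 0 < γ) (hγL : γ * Lf < 1)
    (hrange : ∀ x ∈ interior (edom h), fbT h h' f f' g γ x ⊆ interior (edom h))
    (xm : Rn n) (hxm : xm ∈ closure (interior (edom h))) (hxmfin : f xm + g xm ≠ ⊤)
    (hmin : ∀ y ∈ closure (interior (edom h)), f xm + g xm ≤ f y + g y)
    (hσ : 0 < σ) (hε : 0 < ε)
    (K : ℕ) (x xb : ℕ → Rn n)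
    (hxC : ∀ k ≤ K, x k ∈ interior (edom h))
    (hxb : ∀ k < K, xb k ∈ fbT h h' f f' g γ (x k))
    (hdesc : ∀ k < K,
      fbEnv h h' f f' g γ (x (k + 1))
        ≤ fbEnv h h' f f' g γ (x k) - ((σ : ℝ) : EReal) * Dbreg h h' (xb k) (x k))
    (hbig : ∀ k < K, ((ε : ℝ) : EReal) < Dbreg h h' (xb k) (x k)) :
    (((K : ℝ) * (σ * ε) : ℝ) : EReal) ≤ (f (x 0) + g (x 0)) - (f xm + g xm) :=
  stmt16_iteration_complexity_general h h' f f' g Lf γ σ ε hLeg hLf hRel hf' hg hγ hγL xm hxmfin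
    hmin hσ K x xb hxC hdesc hbig
end

section
/- Let R : ℝⁿ → ℝⁿ satisfy R(x⋆) = 0, and suppose R is strictly differentiable at x⋆ with invertible derivative A (i.e., R(y) − R(z) − A(y − z) = o(‖y − z‖) as y, z → x⋆, and A is an invertible linear map). Let (xᵏ) be a sequence with xᵏ → x⋆ and xᵏ ≠ x⋆ for all k, and let (dᵏ) be a sequence of nonzero vectors satisfying the Dennis–Moré condition ‖R(xᵏ) + A dᵏ‖ / ‖dᵏ‖ → 0. Then ‖xᵏ + dᵏ − x⋆‖ / ‖xᵏ − x⋆‖ → 0 as k → ∞, i.e., the directions dᵏ are superlinear with respect to x⋆. -/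
/-!
Write `eᵏ = xᵏ - x⋆`, `uᵏ = R(xᵏ) + A dᵏ` and `rᵏ = R(xᵏ) - A eᵏ`; differentiability gives `r = o(e)`
and the Dennis–Moré condition says `u = o(d)`. Since `A dᵏ = uᵏ - rᵏ - A eᵏ`, the term `uᵏ` can be
absorbed into the left-hand side, so `d = O(e)`; hence `u = o(e)` and `A (eᵏ + dᵏ) = uᵏ - rᵏ = o(e)`.
-/

open Filter Topology Set

noncomputable section

namespace Asymptotics

theorem IsLittleO.isBigO_of_isBigO_sub {α E F : Type*} [NormedAddCommGroup E] [Norm F]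
    {l : Filter α} {p v : α → E} {g : α → F} (hp : p =o[l] v) (h : (v - p) =O[l] g) :
    v =O[l] g :=
  hp.neg_left.right_isTheta_add'.isBigO.trans (h.congr_left fun k => sub_eq_add_neg (v k) (p k))

end Asymptotics

open Asymptotics

section DennisMore

variable {𝕜 E F α : Type*} [NontriviallyNormedField 𝕜] [NormedAddCommGroup E] [NormedSpace 𝕜 E]
  [NormedAddCommGroup F] [NormedSpace 𝕜 F] {R : E → F} {A : E ≃L[𝕜] F} {x₀ : E}
  {l : Filter α} {x d : α → E}

theorem isBigO_of_dennisMore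
    (hr : (fun k => R (x k) - A (x k - x₀)) =o[l] fun k => x k - x₀)
    (hDM : (fun k => R (x k) + A (d k)) =o[l] d) :
    d =O[l] fun k => x k - x₀ := by
  have hu : (fun k => R (x k) + A (d k)) =o[l] fun k => A (d k) :=
    hDM.trans_isBigO (A.isBigO_comp_rev d l)
  have hrest : ((fun k => A (d k)) - fun k => R (x k) + A (d k)) =O[l] fun k => x k - x₀ := by
    refine (hr.isBigO.add (A.isBigO_comp (fun k => x k - x₀) l)).neg_left.congr_left fun k => ?_
    simp only [Pi.sub_apply]
    abel
  exact (A.isBigO_comp_rev d l).trans (hu.isBigO_of_isBigO_sub hrest)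

theorem superlinear_of_dennisMore
    (hr : (fun k => R (x k) - A (x k - x₀)) =o[l] fun k => x k - x₀)
    (hDM : (fun k => R (x k) + A (d k)) =o[l] d) :
    (fun k => x k + d k - x₀) =o[l] fun k => x k - x₀ := by
  have hu := hDM.trans_isBigO (isBigO_of_dennisMore hr hDM)
  have hA : (fun k => A (x k + d k - x₀)) =o[l] fun k => x k - x₀ := by
    refine (hu.sub hr).congr_left fun k => ?_
    rw [add_sub_right_comm (x k), map_add]
    abel
  exact (A.isBigO_comp_rev _ l).trans_isLittleO hA

end DennisMore

theorem stmt19_dennis_more_superlinear_general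
    {n : ℕ} (R : Rn n → Rn n) (xs : Rn n) (A : Rn n ≃L[ℝ] Rn n)
    (hR0 : R xs = 0)
    (hstrict : HasStrictFDerivAt R (A : Rn n →L[ℝ] Rn n) xs)
    (x d : ℕ → Rn n)
    (hx : Tendsto x atTop (𝓝 xs)) (hdne : ∀ k, d k ≠ 0)
    (hDM : Tendsto (fun k => ‖R (x k) + A (d k)‖ / ‖d k‖) atTop (𝓝 (0 : ℝ))) :
    Tendsto (fun k => ‖x k + d k - xs‖ / ‖x k - xs‖) atTop (𝓝 (0 : ℝ)) := by
  have hr : (fun k => R (x k) - A (x k - xs)) =o[atTop] fun k => x k - xs := by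
    simpa only [hR0, sub_zero, Function.comp_def, ContinuousLinearEquiv.coe_coe] using
      hstrict.hasFDerivAt.isLittleO.comp_tendsto hx
  have hDM' : (fun k => R (x k) + A (d k)) =o[atTop] d := by
    rw [← isLittleO_norm_norm,
      isLittleO_iff_tendsto fun k hk => absurd (norm_eq_zero.mp hk) (hdne k)]
    exact hDM
  exact (superlinear_of_dennisMore hr hDM').norm_norm.tendsto_div_nhds_zero

theorem stmt19_dennis_more_superlinear
    {n : ℕ} (R : Rn n → Rn n) (xs : Rn n) (A : Rn n ≃L[ℝ] Rn n)
    (hR0 : R xs = 0)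
    (hstrict : HasStrictFDerivAt R (A : Rn n →L[ℝ] Rn n) xs)
    (x d : ℕ → Rn n)
    (hx : Tendsto x atTop (𝓝 xs)) (hxne : ∀ k, x k ≠ xs) (hdne : ∀ k, d k ≠ 0)
    (hDM : Tendsto (fun k => ‖R (x k) + A (d k)‖ / ‖d k‖) atTop (𝓝 (0 : ℝ))) :
    Tendsto (fun k => ‖x k + d k - xs‖ / ‖x k - xs‖) atTop (𝓝 (0 : ℝ)) :=
  stmt19_dennis_more_superlinear_general R xs A hR0 hstrict x d hx hdne hDM
end
end
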